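/- arXiv:1801.05342 — 6 statements merged into one kernel-verified Lean document; each statement's English description precedes it below -/
import Mathlib

section
/- Define f : ℝ → ℝ by f(x) = (cosh x − 1)/x² for x ≠ 0 and f(0) = 1/2. Then f is strictly increasing on [0, ∞). -/
/-!
With `f x = (cosh x - 1) / x ^ 2` one has `x ^ 3 f' x = x sinh x - 2 (cosh x - 1)`, so `f` is
strictly increasing on `(0, ∞)` once `2 (cosh x - 1) < x sinh x` there. That inequality, and the
auxiliary `sinh x < x cosh x` and `1 + x ^ 2 / 2 < cosh x`, are differences vanishing at `0`
whose derivatives are positive (`x sinh x > 0`, `sinh x < x cosh x`, `x < sinh x`). The last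
one gives `f 0 = 1 / 2 < f x` for `x > 0`.
-/

open Real Set

lemma pos_of_hasDerivAt_pos_of_eq_zero {g g' : ℝ → ℝ} (hg : ∀ x, HasDerivAt g (g' x) x)
    (hg₀ : g 0 = 0) (hg' : ∀ x, 0 < x → 0 < g' x) {x : ℝ} (hx : 0 < x) : 0 < g x := by
  have hmono : StrictMonoOn g (Ici 0) :=
    strictMonoOn_of_hasDerivWithinAt_pos (convex_Ici 0)
      (fun y _ ↦ (hg y).continuousAt.continuousWithinAt)
      (fun y _ ↦ (hg y).hasDerivWithinAt) (fun y hy ↦ hg' y (by simpa using hy))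
  simpa [hg₀] using hmono self_mem_Ici hx.le hx

namespace Real

lemma sinh_lt_mul_cosh {x : ℝ} (hx : 0 < x) : sinh x < x * cosh x := by
  have hderiv (y : ℝ) : HasDerivAt (fun y ↦ y * cosh y - sinh y) (y * sinh y) y :=
    (((hasDerivAt_id' y).mul (hasDerivAt_cosh y)).sub (hasDerivAt_sinh y)).congr_deriv
      (by ring)
  have := pos_of_hasDerivAt_pos_of_eq_zero hderiv (by simp)
    (fun y hy ↦ mul_pos hy (sinh_pos_iff.mpr hy)) hx
  linarith

lemma two_mul_cosh_sub_one_lt_mul_sinh {x : ℝ} (hx : 0 < x) :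
    2 * (cosh x - 1) < x * sinh x := by
  have hderiv (y : ℝ) : HasDerivAt (fun y ↦ y * sinh y - 2 * (cosh y - 1))
      (y * cosh y - sinh y) y :=
    (((hasDerivAt_id' y).mul (hasDerivAt_sinh y)).sub
      (((hasDerivAt_cosh y).sub_const 1).const_mul 2)).congr_deriv (by ring)
  have := pos_of_hasDerivAt_pos_of_eq_zero hderiv (by simp)
    (fun y hy ↦ sub_pos.mpr (sinh_lt_mul_cosh hy)) hx
  linarith

lemma one_add_sq_div_two_lt_cosh {x : ℝ} (hx : 0 < x) : 1 + x ^ 2 / 2 < cosh x := by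
  have hderiv (y : ℝ) : HasDerivAt (fun y ↦ cosh y - 1 - y ^ 2 / 2) (sinh y - y) y :=
    (((hasDerivAt_cosh y).sub_const 1).sub ((hasDerivAt_pow 2 y).div_const 2)).congr_deriv
      (by ring)
  have := pos_of_hasDerivAt_pos_of_eq_zero hderiv (by simp)
    (fun y hy ↦ sub_pos.mpr (self_lt_sinh_iff.mpr hy)) hx
  linarith

lemma strictMonoOn_cosh_sub_one_div_sq :
    StrictMonoOn (fun x ↦ (cosh x - 1) / x ^ 2) (Ioi 0) := by
  refine strictMonoOn_of_hasDerivWithinAt_pos (convex_Ioi 0)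
    (f' := fun x ↦ (x * sinh x - 2 * (cosh x - 1)) / x ^ 3) ?_ ?_ ?_
  · exact ContinuousOn.div (by fun_prop) (by fun_prop) fun x hx ↦ pow_ne_zero 2 (ne_of_gt hx)
  · intro x hx
    rw [interior_Ioi] at hx
    have hx₀ : x ≠ 0 := ne_of_gt hx
    refine (((hasDerivAt_cosh x).sub_const 1).div (hasDerivAt_pow 2 x)
      (pow_ne_zero 2 hx₀)).congr_deriv ?_ |>.hasDerivWithinAt
    field_simp
    ring
  · intro x hx
    rw [interior_Ioi] at hx
    exact div_pos (sub_pos.mpr (two_mul_cosh_sub_one_lt_mul_sinh hx)) (pow_pos hx 3)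

end Real

theorem stmt_7 (f : ℝ → ℝ)
    (hf : ∀ x : ℝ, x ≠ 0 → f x = (Real.cosh x - 1) / x ^ 2)
    (hf0 : f 0 = 1 / 2) :
    StrictMonoOn f (Set.Ici (0 : ℝ)) := by
  rintro a (ha : 0 ≤ a) b (hb : 0 ≤ b) hab
  have hb₀ : 0 < b := ha.trans_lt hab
  rw [hf b hb₀.ne']
  rcases ha.eq_or_lt with rfl | ha₀
  · rw [hf0, lt_div_iff₀ (by positivity)]
    linarith [one_add_sq_div_two_lt_cosh hb₀]
  · rw [hf a ha₀.ne']
    exact strictMonoOn_cosh_sub_one_div_sq ha₀ hb₀ hab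
end

section
/- The function g(x) = (1 − cos x)/x² is strictly decreasing on (0, π], and in particular for 0 < x ≤ π one has (1 − cos x)/x² ≥ 2/π². -/
/-!
Since `1 - cos x = 2 sin² (x / 2)`, the function is `(sinc (x / 2))² / 2`. On `(0, π]` the
quotient `sin t / t` is the slope of the secant of `sin` through the origin, which is strictly
decreasing because `sin` is strictly concave on `[0, π]`; it is also positive on `(0, π / 2]`.
The lower bound is the value `2 / π²` at the right endpoint.
-/

open Real Set

theorem strictAntiOn_sin_div : StrictAntiOn (fun x : ℝ => sin x / x) (Ioc 0 π) := by
  intro x hx y hy hxy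
  have h := strictConcaveOn_sin_Icc.secant_strict_mono (a := 0) ⟨le_rfl, pi_pos.le⟩
    (Ioc_subset_Icc_self hx) (Ioc_subset_Icc_self hy) hx.1.ne' hy.1.ne' hxy
  simpa only [sin_zero, sub_zero] using h

theorem one_sub_cos_div_sq (x : ℝ) : (1 - cos x) / x ^ 2 = (sin (x / 2) / (x / 2)) ^ 2 / 2 := by
  have h : 1 - cos x = 2 * sin (x / 2) ^ 2 := by
    rw [sin_sq_eq_half_sub, mul_div_cancel₀ x two_ne_zero]; ring
  rw [h]; ring

theorem strictAntiOn_one_sub_cos_div_sq :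
    StrictAntiOn (fun x : ℝ => (1 - cos x) / x ^ 2) (Ioc 0 π) := by
  have half_mem {x : ℝ} (hx : x ∈ Ioc 0 π) : x / 2 ∈ Ioc 0 π :=
    ⟨half_pos hx.1, (half_le_self hx.1.le).trans hx.2⟩
  intro x hx y hy hxy
  have hsinc_pos : 0 < sin (y / 2) / (y / 2) :=
    div_pos (sin_pos_of_pos_of_lt_pi (half_pos hy.1) (by linarith [hy.2, pi_pos]))
      (half_pos hy.1)
  have hsinc_lt := strictAntiOn_sin_div (half_mem hx) (half_mem hy) (by linarith)
  simp only [one_sub_cos_div_sq]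
  gcongr

theorem stmt_10 :
    StrictAntiOn (fun x : ℝ => (1 - Real.cos x) / x ^ 2) (Set.Ioc 0 Real.pi) ∧
      ∀ x : ℝ, 0 < x → x ≤ Real.pi →
        (1 - Real.cos x) / x ^ 2 ≥ 2 / Real.pi ^ 2 := by
  refine ⟨strictAntiOn_one_sub_cos_div_sq, fun x hx hxπ => ?_⟩
  have h := strictAntiOn_one_sub_cos_div_sq.antitoneOn ⟨hx, hxπ⟩ ⟨pi_pos, le_rfl⟩ hxπ
  rwa [cos_pi, sub_neg_eq_add, one_add_one_eq_two] at h
end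

section
/- Let r > 0 and let ζ, θ be real numbers with |θ| ≤ π. Define D by cosh D = cosh(ζ)·cosh²(r) − cos(θ)·sinh²(r) (with D ≥ 0), and define the Euclidean distance d_E by d_E² = ζ²·cosh²(r) + θ²·sinh²(r). If A, B are reals with 0 < |θ| ≤ A ≤ π and 0 < |ζ| ≤ B, then ((1 − cos A)/A²)·d_E² ≤ cosh D − 1 ≤ ((cosh B − 1)/B²)·d_E². -/
/-!
Since `cosh² r - sinh² r = 1`, the hypothesis says
`cosh D - 1 = (cosh ζ - 1) cosh² r + (1 - cos θ) sinh² r`, so the two terms can be compared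
with `ζ²` and `θ²` separately. By the half-angle formulas,
`(1 - cos x) / x² = ½ (sin (x/2) / (x/2))²` and `(cosh x - 1) / x² = ½ (sinh (x/2) / (x/2))²`.
Secant slopes through `0` of `sin`, concave on `[0, π]`, and of `sinh`, convex on `[0, ∞)`, are
respectively decreasing and increasing, so the first ratio decreases on `(0, π]` and the second
increases on `(0, ∞)`. The cross terms (`cosh ζ - 1` against the cosine ratio, `1 - cos θ`
against the cosh ratio) go through `½`, which bounds the first ratio above and the second below.
-/

open Set

namespace Real

lemma convexOn_sinh_Ici : ConvexOn ℝ (Ici 0) sinh := by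
  refine convexOn_of_deriv2_nonneg' (convex_Ici 0) differentiable_sinh.differentiableOn
    (by rw [deriv_sinh]; exact differentiable_cosh.differentiableOn) fun x hx => ?_
  have hderiv2 : deriv^[2] sinh = sinh := by simp [deriv_sinh, deriv_cosh]
  rw [hderiv2]
  exact sinh_nonneg_iff.2 hx

lemma sinh_div_self_monotoneOn : MonotoneOn (fun x => sinh x / x) (Ioi 0) := by
  intro x hx y hy hxy
  simpa using convexOn_sinh_Ici.secant_mono self_mem_Ici (mem_Ici.2 hx.le) (mem_Ici.2 hy.le)
    hx.ne' hy.ne' hxy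

lemma sin_div_self_antitoneOn : AntitoneOn (fun x => sin x / x) (Ioc 0 π) := by
  intro x hx y hy hxy
  have := strictConcaveOn_sin_Icc.concaveOn.neg.secant_mono ⟨le_rfl, pi_pos.le⟩
    (Ioc_subset_Icc_self hx) (Ioc_subset_Icc_self hy) hx.1.ne' hy.1.ne' hxy
  simpa [neg_div] using this

lemma one_sub_cos_eq_two_mul_sin_sq (x : ℝ) : 1 - cos x = 2 * sin (x / 2) ^ 2 := by
  rw [sin_sq_eq_half_sub, show 2 * (x / 2) = x by ring]
  ring

lemma cosh_sub_one_eq_two_mul_sinh_sq (x : ℝ) : cosh x - 1 = 2 * sinh (x / 2) ^ 2 := by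
  have h := cosh_two_mul (x / 2)
  rw [show 2 * (x / 2) = x by ring, cosh_sq] at h
  linarith

lemma one_sub_cos_div_sq_antitoneOn : AntitoneOn (fun x => (1 - cos x) / x ^ 2) (Ioc 0 π) := by
  intro x hx y hy hxy
  have half_mem {t : ℝ} (ht : t ∈ Ioc 0 π) : t / 2 ∈ Ioc 0 π :=
    ⟨half_pos ht.1, by linarith [ht.2, pi_pos]⟩
  have hslope : sin (y / 2) / (y / 2) ≤ sin (x / 2) / (x / 2) :=
    sin_div_self_antitoneOn (half_mem hx) (half_mem hy) (by linarith)
  have hslope_nonneg : 0 ≤ sin (y / 2) / (y / 2) :=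
    div_nonneg (sin_nonneg_of_mem_Icc (Ioc_subset_Icc_self (half_mem hy))) (half_pos hy.1).le
  have hx0 : x ≠ 0 := hx.1.ne'
  have hy0 : y ≠ 0 := hy.1.ne'
  calc (1 - cos y) / y ^ 2 = (sin (y / 2) / (y / 2)) ^ 2 / 2 := by
        rw [one_sub_cos_eq_two_mul_sin_sq]; field_simp
    _ ≤ (sin (x / 2) / (x / 2)) ^ 2 / 2 := by gcongr
    _ = (1 - cos x) / x ^ 2 := by
        rw [one_sub_cos_eq_two_mul_sin_sq]; field_simp

lemma cosh_sub_one_div_sq_monotoneOn : MonotoneOn (fun x => (cosh x - 1) / x ^ 2) (Ioi 0) := by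
  intro x hx y hy hxy
  have hslope : sinh (x / 2) / (x / 2) ≤ sinh (y / 2) / (y / 2) :=
    sinh_div_self_monotoneOn (mem_Ioi.2 (half_pos hx)) (mem_Ioi.2 (half_pos hy)) (by linarith)
  have hslope_nonneg : 0 ≤ sinh (x / 2) / (x / 2) :=
    div_nonneg (sinh_nonneg_iff.2 (half_pos hx).le) (half_pos hx).le
  have hx0 : x ≠ 0 := hx.ne'
  have hy0 : y ≠ 0 := hy.ne'
  calc (cosh x - 1) / x ^ 2 = (sinh (x / 2) / (x / 2)) ^ 2 / 2 := by
        rw [cosh_sub_one_eq_two_mul_sinh_sq]; field_simp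
    _ ≤ (sinh (y / 2) / (y / 2)) ^ 2 / 2 := by gcongr
    _ = (cosh y - 1) / y ^ 2 := by
        rw [cosh_sub_one_eq_two_mul_sinh_sq]; field_simp

lemma sq_div_two_le_cosh_sub_one (x : ℝ) : x ^ 2 / 2 ≤ cosh x - 1 := by
  have hsq : (x / 2) ^ 2 ≤ sinh (x / 2) ^ 2 :=
    sq_le_sq.2 (by rw [abs_sinh]; exact self_le_sinh_iff.2 (abs_nonneg _))
  rw [cosh_sub_one_eq_two_mul_sinh_sq]
  linarith

lemma one_sub_cos_div_sq_le_half (x : ℝ) : (1 - cos x) / x ^ 2 ≤ 1 / 2 :=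
  div_le_of_le_mul₀ (sq_nonneg x) (by norm_num) (by linarith [one_sub_sq_div_two_le_cos (x := x)])

lemma half_le_cosh_sub_one_div_sq {x : ℝ} (hx : x ≠ 0) : 1 / 2 ≤ (cosh x - 1) / x ^ 2 :=
  (le_div_iff₀ (by positivity)).2 (by linarith [sq_div_two_le_cosh_sub_one x])

lemma one_sub_cos_div_sq_mul_sq_le {x y : ℝ} (hxy : |x| ≤ y) (hy : y ≤ π) :
    (1 - cos y) / y ^ 2 * x ^ 2 ≤ 1 - cos x := by
  rcases (abs_nonneg x).eq_or_lt with hx | hx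
  · simp [abs_eq_zero.1 hx.symm]
  have hratio := one_sub_cos_div_sq_antitoneOn ⟨hx, hxy.trans hy⟩ ⟨hx.trans_le hxy, hy⟩ hxy
  simp only [cos_abs, sq_abs] at hratio
  calc (1 - cos y) / y ^ 2 * x ^ 2 ≤ (1 - cos x) / x ^ 2 * x ^ 2 := by gcongr
    _ = 1 - cos x := div_mul_cancel₀ _ (pow_ne_zero 2 (abs_pos.1 hx))

lemma cosh_sub_one_le_div_sq_mul_sq {x y : ℝ} (hxy : |x| ≤ y) :
    cosh x - 1 ≤ (cosh y - 1) / y ^ 2 * x ^ 2 := by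
  rcases (abs_nonneg x).eq_or_lt with hx | hx
  · simp [abs_eq_zero.1 hx.symm]
  have hratio := cosh_sub_one_div_sq_monotoneOn hx (hx.trans_le hxy) hxy
  simp only [cosh_abs, sq_abs] at hratio
  calc cosh x - 1 = (cosh x - 1) / x ^ 2 * x ^ 2 :=
        (div_mul_cancel₀ _ (pow_ne_zero 2 (abs_pos.1 hx))).symm
    _ ≤ (cosh y - 1) / y ^ 2 * x ^ 2 := by gcongr

end Real

open Real

theorem stmt_11_general (r ζ θ A B D : ℝ)
    (hθA : |θ| ≤ A) (hAπ : A ≤ Real.pi)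
    (hζ : 0 < |ζ|) (hζB : |ζ| ≤ B)
    (hcoshD : Real.cosh D =
      Real.cosh ζ * Real.cosh r ^ 2 - Real.cos θ * Real.sinh r ^ 2) :
    ((1 - Real.cos A) / A ^ 2) * (ζ ^ 2 * Real.cosh r ^ 2 + θ ^ 2 * Real.sinh r ^ 2)
      ≤ Real.cosh D - 1 ∧
    Real.cosh D - 1 ≤
      ((Real.cosh B - 1) / B ^ 2) * (ζ ^ 2 * Real.cosh r ^ 2 + θ ^ 2 * Real.sinh r ^ 2) := by
  have hsplit : cosh D - 1 = (cosh ζ - 1) * cosh r ^ 2 + (1 - cos θ) * sinh r ^ 2 := by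
    rw [hcoshD, cosh_sq r]; ring
  have hζ_lower : (1 - cos A) / A ^ 2 * ζ ^ 2 ≤ cosh ζ - 1 := by
    nlinarith [one_sub_cos_div_sq_le_half A, sq_div_two_le_cosh_sub_one ζ, sq_nonneg ζ]
  have hθ_lower := one_sub_cos_div_sq_mul_sq_le hθA hAπ
  have hζ_upper := cosh_sub_one_le_div_sq_mul_sq hζB
  have hθ_upper : 1 - cos θ ≤ (cosh B - 1) / B ^ 2 * θ ^ 2 := by
    nlinarith [half_le_cosh_sub_one_div_sq (hζ.trans_le hζB).ne', one_sub_sq_div_two_le_cos (x := θ),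
      sq_nonneg θ]
  rw [hsplit]
  constructor
  · calc (1 - cos A) / A ^ 2 * (ζ ^ 2 * cosh r ^ 2 + θ ^ 2 * sinh r ^ 2)
        = (1 - cos A) / A ^ 2 * ζ ^ 2 * cosh r ^ 2 + (1 - cos A) / A ^ 2 * θ ^ 2 * sinh r ^ 2 := by
          ring
      _ ≤ (cosh ζ - 1) * cosh r ^ 2 + (1 - cos θ) * sinh r ^ 2 := by gcongr
  · calc (cosh ζ - 1) * cosh r ^ 2 + (1 - cos θ) * sinh r ^ 2
        ≤ (cosh B - 1) / B ^ 2 * ζ ^ 2 * cosh r ^ 2 + (cosh B - 1) / B ^ 2 * θ ^ 2 * sinh r ^ 2 := by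
          gcongr
      _ = (cosh B - 1) / B ^ 2 * (ζ ^ 2 * cosh r ^ 2 + θ ^ 2 * sinh r ^ 2) := by ring

theorem stmt_11 (r ζ θ A B D : ℝ) (hr : 0 < r)
    (hθπ : |θ| ≤ Real.pi)
    (hθ : 0 < |θ|) (hθA : |θ| ≤ A) (hAπ : A ≤ Real.pi)
    (hζ : 0 < |ζ|) (hζB : |ζ| ≤ B)
    (hD : 0 ≤ D)
    (hcoshD : Real.cosh D =
      Real.cosh ζ * Real.cosh r ^ 2 - Real.cos θ * Real.sinh r ^ 2) :
    ((1 - Real.cos A) / A ^ 2) * (ζ ^ 2 * Real.cosh r ^ 2 + θ ^ 2 * Real.sinh r ^ 2)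
      ≤ Real.cosh D - 1 ∧
    Real.cosh D - 1 ≤
      ((Real.cosh B - 1) / B ^ 2) * (ζ ^ 2 * Real.cosh r ^ 2 + θ ^ 2 * Real.sinh r ^ 2) :=
  stmt_11_general r ζ θ A B D hθA hAπ hζ hζB hcoshD
end

section
/- Let r > 0, and let ζ, θ be real numbers with 0 < |θ| ≤ π. Let D ≥ 0 satisfy cosh D = cosh(ζ)·cosh²(r) − cos(θ)·sinh²(r), and let d_E = sqrt(ζ²·cosh²(r) + θ²·sinh²(r)). If D ≤ 0.3, then 0.6342·d_E < D. -/
lemma sq_le_sinh_sq (t : ℝ) : t ^ 2 ≤ Real.sinh t ^ 2 := by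
  rcases le_or_gt 0 t with h | h
  · rcases eq_or_lt_of_le h with h0 | h0
    · simp [← h0]
    · have := Real.self_lt_sinh_iff.mpr h0
      nlinarith
  · have h0 : 0 < -t := by linarith
    have := Real.self_lt_sinh_iff.mpr h0
    rw [Real.sinh_neg] at this
    nlinarith

lemma cosh_lower (x : ℝ) : 1 + x ^ 2 / 2 ≤ Real.cosh x := by
  have h : Real.cosh x = Real.cosh (2 * (x / 2)) := by ring_nf
  rw [h, Real.cosh_two_mul, Real.cosh_sq]
  have := sq_le_sinh_sq (x / 2)
  nlinarith

lemma cos_upper {θ : ℝ} (hθπ : |θ| ≤ Real.pi) :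
    2 * θ ^ 2 ≤ Real.pi ^ 2 * (1 - Real.cos θ) := by
  set t := |θ| / 2 with ht
  have hπ := Real.pi_pos
  have h0 : 0 ≤ t := by positivity
  have h1 : t ≤ Real.pi / 2 := by rw [ht]; linarith
  have hsin := Real.mul_le_sin h0 h1
  have hcos : Real.cos θ = 1 - 2 * Real.sin t ^ 2 := by
    have : Real.cos (2 * t) = 1 - 2 * Real.sin t ^ 2 := by
      rw [Real.cos_two_mul']
      nlinarith [Real.sin_sq_add_cos_sq t]
    rw [← Real.cos_abs θ, show |θ| = 2 * t by rw [ht]; ring, this]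
  rw [hcos]
  have hsin0 : 0 ≤ 2 / Real.pi * t := by positivity
  have hsq : (2 / Real.pi * t) ^ 2 ≤ Real.sin t ^ 2 := by nlinarith
  have htθ : t ^ 2 = θ ^ 2 / 4 := by
    rw [ht]; rw [div_pow, sq_abs]; ring
  have hexp : (2 / Real.pi * t) ^ 2 = θ ^ 2 / Real.pi ^ 2 := by
    rw [mul_pow, div_pow, htθ]
    field_simp
    ring
  rw [hexp] at hsq
  have : θ ^ 2 / Real.pi ^ 2 * Real.pi ^ 2 = θ ^ 2 := by field_simp
  nlinarith [hsq]

lemma cosh_upper {x : ℝ} (h0 : 0 ≤ x) (h1 : x ≤ 1) :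
    Real.cosh x ≤ 1 + x ^ 2 / 2 + x ^ 4 / 24 + x ^ 6 / 720 + x ^ 7 / 4410 := by
  have hx : |x| ≤ 1 := by rwa [abs_of_nonneg h0]
  have hx' : |(-x)| ≤ 1 := by rwa [abs_neg]
  have hb := Real.exp_bound hx (n := 7) (by norm_num)
  have hb' := Real.exp_bound hx' (n := 7) (by norm_num)
  rw [abs_of_nonneg h0] at hb
  rw [abs_neg, abs_of_nonneg h0] at hb'
  simp only [Finset.sum_range_succ, Finset.sum_range_zero, Nat.factorial] at hb hb'
  rw [abs_sub_le_iff] at hb hb'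
  have e1 := hb.1
  have e2 := hb'.1
  rw [Real.cosh_eq]
  push_cast at e1 e2 ⊢
  nlinarith [e1, e2]

set_option maxHeartbeats 1000000 in
theorem stmt_12 (r ζ θ D : ℝ) (hr : 0 < r)
    (hθ : 0 < |θ|) (hθπ : |θ| ≤ Real.pi)
    (hD : 0 ≤ D)
    (hcoshD : Real.cosh D =
      Real.cosh ζ * Real.cosh r ^ 2 - Real.cos θ * Real.sinh r ^ 2)
    (hD3 : D ≤ 0.3) :
    0.6342 * Real.sqrt (ζ ^ 2 * Real.cosh r ^ 2 + θ ^ 2 * Real.sinh r ^ 2) < D := by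
  have hπ := Real.pi_pos
  have hπ3 : Real.pi < 3.141593 := Real.pi_lt_d6
  have hπg : 3 < Real.pi := Real.pi_gt_three
  have hsinh : 0 < Real.sinh r := Real.sinh_pos_iff.mpr hr
  have hcoshr : 1 ≤ Real.cosh r := Real.one_le_cosh r
  have hcz := cosh_lower ζ
  have hct := cos_upper hθπ
  have hθ2 : 0 < θ ^ 2 := by
    have : θ ≠ 0 := by simpa [abs_pos] using hθ
    positivity
  -- pythagorean identity
  have hpyth : Real.cosh r ^ 2 - Real.sinh r ^ 2 = 1 := Real.cosh_sq_sub_sinh_sq r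
  -- cosh D > 1, hence D > 0
  have hcosθ : Real.cos θ < 1 := by nlinarith
  have hsinh2 : 0 < Real.sinh r ^ 2 := by positivity
  have hAnn : 0 ≤ (Real.cosh ζ - 1) * Real.cosh r ^ 2 := by nlinarith [sq_nonneg ζ]
  have hD1 : 1 < Real.cosh D := by nlinarith [mul_pos (by linarith : (0:ℝ) < 1 - Real.cos θ) hsinh2]
  have hD0 : 0 < D := by
    rcases eq_or_lt_of_le hD with h | h
    · rw [← h] at hD1; simp at hD1
    · exact h
  -- lower bound: 2 * s ≤ π² (cosh D - 1)
  set s := ζ ^ 2 * Real.cosh r ^ 2 + θ ^ 2 * Real.sinh r ^ 2 with hs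
  have hs0 : 0 ≤ s := by positivity
  have key1 : 2 * s ≤ Real.pi ^ 2 * (Real.cosh D - 1) := by
    have hsplit : Real.cosh D - 1 =
        (Real.cosh ζ - 1) * Real.cosh r ^ 2 + (1 - Real.cos θ) * Real.sinh r ^ 2 := by
      rw [hcoshD]; nlinarith [hpyth]
    rw [hsplit, hs]
    have hπsq : 9 ≤ Real.pi ^ 2 := by nlinarith
    have hA : 2 * ζ ^ 2 ≤ Real.pi ^ 2 * (Real.cosh ζ - 1) := by
      nlinarith [mul_le_mul_of_nonneg_left (by linarith : ζ ^ 2 / 2 ≤ Real.cosh ζ - 1)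
        (by positivity : (0:ℝ) ≤ Real.pi ^ 2), sq_nonneg ζ]
    nlinarith [mul_le_mul_of_nonneg_right hA (sq_nonneg (Real.cosh r)),
      mul_le_mul_of_nonneg_right hct (sq_nonneg (Real.sinh r))]
  -- upper bound: cosh D - 1 ≤ 0.50377 D²
  have hcu := cosh_upper hD (by linarith : D ≤ 1)
  have h2 : D ^ 2 ≤ 0.09 := by nlinarith
  have h4 : D ^ 4 ≤ 0.09 * D ^ 2 := by nlinarith
  have h6 : D ^ 6 ≤ 0.0081 * D ^ 2 := by
    nlinarith [mul_le_mul_of_nonneg_right h4 (sq_nonneg D), mul_le_mul_of_nonneg_right h2 (sq_nonneg D)]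
  have h7 : D ^ 7 ≤ 0.00243 * D ^ 2 := by
    nlinarith [mul_le_mul_of_nonneg_right h6 hD, mul_le_mul_of_nonneg_left hD3 (sq_nonneg D)]
  have key2 : Real.cosh D - 1 ≤ 0.50377 * D ^ 2 := by linarith
  -- conclude
  have hfin : Real.sqrt s < D / 0.6342 := by
    rw [Real.sqrt_lt' (by positivity)]
    rw [div_pow]
    rw [lt_div_iff₀ (by norm_num)]
    have hπsq2 : Real.pi ^ 2 ≤ 9.86961 := by nlinarith
    nlinarith [mul_pos hD0 hD0, mul_le_mul_of_nonneg_left key2 (sq_nonneg Real.pi),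
      mul_le_mul_of_nonneg_right hπsq2 (by positivity : (0:ℝ) ≤ 0.50377 * D ^ 2)]
  calc 0.6342 * Real.sqrt s < 0.6342 * (D / 0.6342) := by
        exact mul_lt_mul_of_pos_left hfin (by norm_num)
    _ = D := by ring
end

section
/- Suppose 0 < δ < ε and let x = cosh ε, y = cosh δ. Let a, a', b, b' be reals with a < a' < 1 = b < b' and a = cos α for some α. If (x − a')/(b' − a') ≤ (x − a)/(b − a), then (y − a')/(b' − a') < (y − a)/(b − a). -/
theorem stmt_14 (δ ε a a' b b' : ℝ) (hδ : 0 < δ) (hδε : δ < ε)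
    (haa' : a < a') (ha'b : a' < 1) (hb : b = 1) (hbb' : b < b')
    (h : (Real.cosh ε - a') / (b' - a') ≤ (Real.cosh ε - a) / (b - a)) :
    (Real.cosh δ - a') / (b' - a') < (Real.cosh δ - a) / (b - a) := by
  subst hb
  set X := Real.cosh ε
  set Y := Real.cosh δ
  have hY1 : 1 < Y := by
    have := Real.one_lt_cosh.mpr (ne_of_gt hδ)
    simpa [Y] using this
  have hYX : Y < X := by
    have : |δ| < |ε| := by
      rw [abs_of_pos hδ, abs_of_pos (hδ.trans hδε)]; exact hδε
    simpa [X, Y] using Real.cosh_lt_cosh.mpr this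
  have h1 : (0:ℝ) < b' - a' := by linarith
  have h2 : (0:ℝ) < 1 - a := by linarith
  rw [div_le_div_iff₀ h1 h2] at h
  rw [div_lt_div_iff₀ h1 h2]
  nlinarith [mul_pos (sub_pos.mpr hYX) (sub_pos.mpr hY1),
    mul_pos h2 (show (0:ℝ) < b' - 1 by linarith),
    mul_pos (sub_pos.mpr hYX) (sub_pos.mpr (lt_trans hY1 hYX))]
end

section
/- Define j(δ, ε) = (1/1.268)·(sqrt(δ/7.256) + sqrt(δ/7.256 − δ²/ε²)). Then for all (δ, ε) with 0 < ε ≤ 0.3 and 0 < δ ≤ ε²/7.256, one has j(δ, ε) ≤ 0.0424. -/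
/-
Substituting `x = 7.256 δ / ε²` ∈ [0, 1] turns the bracket into `(ε / 7.256) (√x + √(x - x²))`.
With `a = √x`, `u = √(1 - x)` this is `(ε / 7.256) a (1 + u)`, and `a²(1 + u)² = (1 - u)(1 + u)³`
is maximal at `u = 1/2`, giving `√x + √(x - x²) ≤ 3√3/4`. Hence
`j(δ, ε) ≤ 0.3 · 3√3 / (4 · 7.256 · 1.268) ≈ 0.04235`.
-/

open Real

theorem sqrt_add_sqrt_sub_sq_le {x : ℝ} (hx0 : 0 ≤ x) (hx1 : x ≤ 1) :
    √x + √(x - x ^ 2) ≤ 3 * √3 / 4 := by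
  set a := √x
  set u := √(1 - x)
  have ha : a ^ 2 = x := sq_sqrt hx0
  have hu : u ^ 2 = 1 - x := sq_sqrt (by linarith)
  have hu0 : 0 ≤ u := sqrt_nonneg _
  have hfactor : √x + √(x - x ^ 2) = a * (1 + u) := by
    rw [show x - x ^ 2 = x * (1 - x) by ring, sqrt_mul hx0]
    ring
  have hsq : (a * (1 + u)) ^ 2 ≤ (3 * √3 / 4) ^ 2 := by
    have h3 : √3 ^ 2 = 3 := sq_sqrt (by norm_num)
    nlinarith [mul_nonneg hu0 (sq_nonneg (2 * u - 1)), sq_nonneg (2 * u - 1)]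
  rw [hfactor]
  exact (pow_le_pow_iff_left₀ (by positivity) (by positivity) two_ne_zero).mp hsq

theorem sqrt_div_add_sqrt_div_sub_eq {c δ ε : ℝ} (hc : 0 < c) (hε : ε ≠ 0) :
    √(δ / c) + √(δ / c - δ ^ 2 / ε ^ 2)
      = |ε| / c * (√(c * δ / ε ^ 2) + √(c * δ / ε ^ 2 - (c * δ / ε ^ 2) ^ 2)) := by
  set x := c * δ / ε ^ 2 with hx
  have hscale : ∀ y, √((|ε| / c) ^ 2 * y) = |ε| / c * √y := fun y ↦ by
    rw [sqrt_mul (sq_nonneg _), sqrt_sq (by positivity)]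
  have h1 : δ / c = (|ε| / c) ^ 2 * x := by
    rw [div_pow, sq_abs, hx]
    field_simp
  have h2 : δ / c - δ ^ 2 / ε ^ 2 = (|ε| / c) ^ 2 * (x - x ^ 2) := by
    rw [div_pow, sq_abs, hx]
    field_simp
  rw [h2, h1, hscale, hscale, mul_add]

theorem stmt_17 (δ ε : ℝ) (hε : 0 < ε) (hε3 : ε ≤ 0.3)
    (hδ : 0 < δ) (hδε : δ ≤ ε ^ 2 / 7.256) :
    (1 / 1.268) * (Real.sqrt (δ / 7.256) + Real.sqrt (δ / 7.256 - δ ^ 2 / ε ^ 2))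
      ≤ 0.0424 := by
  rw [sqrt_div_add_sqrt_div_sub_eq (by norm_num) hε.ne', abs_of_pos hε]
  set x := 7.256 * δ / ε ^ 2
  have hx0 : 0 ≤ x := by positivity
  have hx1 : x ≤ 1 := by
    rw [div_le_one (by positivity)]
    linarith [(le_div_iff₀ (by norm_num : (0 : ℝ) < 7.256)).mp hδε]
  have hsqrt3 : √3 ≤ 1.7321 := sqrt_le_left (by norm_num) |>.mpr (by norm_num)
  calc 1 / 1.268 * (ε / 7.256 * (√x + √(x - x ^ 2)))
      ≤ 1 / 1.268 * (0.3 / 7.256 * (3 * √3 / 4)) := by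
        gcongr
        exact sqrt_add_sqrt_sub_sq_le hx0 hx1
    _ ≤ 0.0424 := by linarith
end
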